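/- Let R → S be a ring homomorphism. Then R/PR → S/PS has the prime extension property for every minimal prime P of R if and only if R → S has the prime extension property. -/

import Mathlib

/-!
Primes of `R ⧸ P` are the images of the primes `Q ⊇ P` of `R`, and extending `Q ⧸ P` along
`R ⧸ P → S ⧸ PS` gives `QS ⧸ PS`, which is prime or the unit ideal exactly when `QS` is.
So the quotient map at `P` has the prime extension property iff every prime `Q ⊇ P` extends
well; as every prime contains a minimal prime, ranging over the minimal primes `P` covers all `Q`.
-/

/-- A ring homomorphism has the prime extension property if every prime ideal of the
source extends to a prime ideal or the unit ideal of the target. -/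
def PrimeExtensionProperty {R S : Type*} [CommRing R] [CommRing S] (f : R →+* S) : Prop :=
  ∀ P : Ideal R, P.IsPrime → (P.map f).IsPrime ∨ P.map f = ⊤

namespace Ideal

variable {R S : Type*} [CommRing R] [CommRing S]

theorem isPrime_or_eq_top_map_quotientMk_iff {K J : Ideal S} (hKJ : K ≤ J) :
    (J.map (Quotient.mk K)).IsPrime ∨ J.map (Quotient.mk K) = ⊤ ↔ J.IsPrime ∨ J = ⊤ := by
  constructor
  · rintro (hprime | htop)
    · exact .inl (comap_map_mk hKJ ▸ hprime.comap _)
    · exact .inr (by rw [← comap_map_mk hKJ, htop, comap_top])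
  · rintro (hprime | rfl)
    · exact .inl (isPrime_map_quotientMk_of_isPrime hKJ)
    · exact .inr (map_top _)

theorem map_quotientMap_map_quotientMk (f : R →+* S) (I Q : Ideal R) :
    (Q.map (Quotient.mk I)).map (quotientMap (I.map f) f le_comap_map) =
      (Q.map f).map (Quotient.mk (I.map f)) := by
  rw [map_map, quotientMap_comp_mk, ← map_map]

end Ideal

open Ideal in
theorem primeExtensionProperty_quotientMap_iff {R S : Type*} [CommRing R] [CommRing S]
    (f : R →+* S) (I : Ideal R) :
    PrimeExtensionProperty (quotientMap (I.map f) f le_comap_map : R ⧸ I →+* S ⧸ I.map f) ↔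
      ∀ Q : Ideal R, Q.IsPrime → I ≤ Q → (Q.map f).IsPrime ∨ Q.map f = ⊤ := by
  constructor
  · intro h Q hQ hIQ
    have := h _ (isPrime_map_quotientMk_of_isPrime hIQ)
    rwa [map_quotientMap_map_quotientMk,
      isPrime_or_eq_top_map_quotientMk_iff (map_mono hIQ)] at this
  · intro h Q' hQ'
    have hIQ : I ≤ Q'.comap (Ideal.Quotient.mk I) := mk_ker.symm.trans_le (ker_le_comap _)
    rw [← map_comap_of_surjective _ Ideal.Quotient.mk_surjective Q',
      map_quotientMap_map_quotientMk, isPrime_or_eq_top_map_quotientMk_iff (map_mono hIQ)]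
    exact h _ (hQ'.comap _) hIQ

theorem pep_iff_pep_quotient_minimal_primes {R S : Type*} [CommRing R] [CommRing S]
    (f : R →+* S) :
    (∀ P ∈ minimalPrimes R,
      PrimeExtensionProperty (Ideal.quotientMap (P.map f) f Ideal.le_comap_map :
        R ⧸ P →+* S ⧸ P.map f)) ↔
    PrimeExtensionProperty f := by
  simp only [primeExtensionProperty_quotientMap_iff]
  constructor
  · intro h Q hQ
    obtain ⟨P, hPmin, hPQ⟩ := Ideal.exists_minimalPrimes_le (J := Q) bot_le
    exact h P hPmin Q hQ hPQ
  · exact fun h _ _ Q hQ _ ↦ h Q hQ
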